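/- arXiv:2011.03326 — 4 statements merged into one kernel-verified Lean document; each statement's English description precedes it below -/
import Mathlib

section
/- Let α, β be complex numbers with |α| ≥ |β|, let p be a prime dividing a positive integer n, and suppose |α^{n/p} − β^{n/p}| ≤ (2/p)·|α|^{n/p} and α^{n/p} ≠ β^{n/p}. Then |α^n − β^n| ≥ |α^{n/p} − β^{n/p}| · |α|^{n(p−1)/p}. -/
/-!
Put `a = α ^ (n / p)` and `b = β ^ (n / p)`, so that `α ^ n - β ^ n = (a - b) S` with
`S = ∑ aⁱ bᵖ⁻¹⁻ⁱ`. Since `S - p aᵖ⁻¹ = ∑ (bⁱ - aⁱ) aᵖ⁻¹⁻ⁱ` and `‖aⁱ - bⁱ‖ ≤ i ‖a‖ⁱ⁻¹ ‖a - b‖`,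
`S` lies within `p (p - 1) / 2 · ‖a‖ᵖ⁻² ‖a - b‖ ≤ (p - 1) ‖a‖ᵖ⁻¹` of `p aᵖ⁻¹`,
so `‖S‖ ≥ ‖a‖ᵖ⁻¹`.
-/

open Finset

section NormedRing

variable {R : Type*} [SeminormedCommRing R] [NormOneClass R]

theorem norm_pow_sub_pow_le {x y : R} {M : ℝ} (hx : ‖x‖ ≤ M) (hy : ‖y‖ ≤ M) (k : ℕ) :
    ‖x ^ k - y ^ k‖ ≤ k * M ^ (k - 1) * ‖x - y‖ := by
  have hM : 0 ≤ M := (norm_nonneg x).trans hx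
  have hterm : ∀ i ∈ range k, ‖x ^ i * y ^ (k - 1 - i)‖ ≤ M ^ (k - 1) := by
    intro i hi
    have hik : i + (k - 1 - i) = k - 1 := by have := mem_range.mp hi; omega
    calc ‖x ^ i * y ^ (k - 1 - i)‖ ≤ ‖x‖ ^ i * ‖y‖ ^ (k - 1 - i) :=
          (norm_mul_le _ _).trans (mul_le_mul (norm_pow_le _ _) (norm_pow_le _ _)
            (norm_nonneg _) (by positivity))
      _ ≤ M ^ i * M ^ (k - 1 - i) := by gcongr
      _ = M ^ (k - 1) := by rw [← pow_add, hik]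
  calc ‖x ^ k - y ^ k‖ ≤ ‖∑ i ∈ range k, x ^ i * y ^ (k - 1 - i)‖ * ‖x - y‖ := by
        rw [← geom_sum₂_mul]; exact norm_mul_le _ _
    _ ≤ (∑ _i ∈ range k, M ^ (k - 1)) * ‖x - y‖ := by
        gcongr; exact norm_sum_le_of_le _ hterm
    _ = k * M ^ (k - 1) * ‖x - y‖ := by simp

theorem norm_natCast_mul_pow_sub_geom_sum₂_le {x y : R} (hyx : ‖y‖ ≤ ‖x‖) (n : ℕ) :
    ‖(n : R) * x ^ (n - 1) - ∑ i ∈ range n, x ^ i * y ^ (n - 1 - i)‖ ≤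
      n * (n - 1) / 2 * ‖x‖ ^ (n - 2) * ‖x - y‖ := by
  have hgauss : ∑ i ∈ range n, (i : ℝ) = n * (n - 1) / 2 := by
    induction n with
    | zero => simp
    | succ n ih => rw [sum_range_succ, ih]; push_cast; ring
  have hdiff : (n : R) * x ^ (n - 1) - ∑ i ∈ range n, x ^ i * y ^ (n - 1 - i) =
      ∑ i ∈ range n, (x ^ i - y ^ i) * x ^ (n - 1 - i) := by
    rw [← geom_sum₂_self, geom_sum₂_comm x y, geom_sum₂_comm x x, ← sum_sub_distrib]
    simp only [sub_mul]
  have hterm : ∀ i ∈ range n, ‖(x ^ i - y ^ i) * x ^ (n - 1 - i)‖ ≤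
      i * ‖x‖ ^ (n - 2) * ‖x - y‖ := by
    intro i hi
    calc ‖(x ^ i - y ^ i) * x ^ (n - 1 - i)‖
        ≤ i * ‖x‖ ^ (i - 1) * ‖x - y‖ * ‖x‖ ^ (n - 1 - i) :=
          (norm_mul_le _ _).trans (mul_le_mul (norm_pow_sub_pow_le le_rfl hyx i)
            (norm_pow_le _ _) (norm_nonneg _) (by positivity))
      _ = i * ‖x‖ ^ (n - 2) * ‖x - y‖ := by
        rcases Nat.eq_zero_or_pos i with rfl | hi0
        · simp
        · have hexp : n - 1 - i + (i - 1) = n - 2 := by have := mem_range.mp hi; omega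
          rw [← hexp, pow_add]; ring
  calc _ ≤ ∑ i ∈ range n, (i : ℝ) * ‖x‖ ^ (n - 2) * ‖x - y‖ := by
        rw [hdiff]; exact norm_sum_le_of_le _ hterm
    _ = _ := by rw [← sum_mul, ← sum_mul, hgauss]

end NormedRing

section RCLike

variable {𝕜 : Type*} [RCLike 𝕜]

theorem pow_norm_le_norm_geom_sum₂ {x y : 𝕜} {n : ℕ} (hn : 0 < n) (hyx : ‖y‖ ≤ ‖x‖)
    (hxy : ‖x - y‖ ≤ 2 / n * ‖x‖) :
    ‖x‖ ^ (n - 1) ≤ ‖∑ i ∈ range n, x ^ i * y ^ (n - 1 - i)‖ := by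
  set M := ‖x‖
  have hshift : ((n : ℝ) - 1) * M ^ (n - 2) * M = ((n : ℝ) - 1) * M ^ (n - 1) := by
    rcases Nat.lt_or_ge n 2 with hn2 | hn2
    · obtain rfl : n = 1 := by omega
      simp
    · rw [mul_assoc, ← pow_succ]; congr 2; omega
  have hdev : ‖(n : 𝕜) * x ^ (n - 1) - ∑ i ∈ range n, x ^ i * y ^ (n - 1 - i)‖ ≤
      ((n : ℝ) - 1) * M ^ (n - 1) :=
    calc _ ≤ n * (n - 1) / 2 * M ^ (n - 2) * ‖x - y‖ :=
          norm_natCast_mul_pow_sub_geom_sum₂_le hyx n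
      _ ≤ n * (n - 1) / 2 * M ^ (n - 2) * (2 / n * M) := by
          have : (1 : ℝ) ≤ n := by exact_mod_cast hn
          gcongr
      _ = ((n : ℝ) - 1) * M ^ (n - 2) * M := by field_simp
      _ = ((n : ℝ) - 1) * M ^ (n - 1) := hshift
  have hlead : ‖(n : 𝕜) * x ^ (n - 1)‖ = n * M ^ (n - 1) := by
    rw [norm_mul, norm_pow, RCLike.norm_natCast]
  have := norm_sub_norm_le ((n : 𝕜) * x ^ (n - 1)) (∑ i ∈ range n, x ^ i * y ^ (n - 1 - i))
  linarith

theorem norm_sub_mul_pow_le_norm_pow_sub_pow {x y : 𝕜} {n : ℕ} (hn : 0 < n)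
    (hyx : ‖y‖ ≤ ‖x‖) (hxy : ‖x - y‖ ≤ 2 / n * ‖x‖) :
    ‖x - y‖ * ‖x‖ ^ (n - 1) ≤ ‖x ^ n - y ^ n‖ := by
  rw [← geom_sum₂_mul, norm_mul, mul_comm]
  exact mul_le_mul_of_nonneg_right (pow_norm_le_norm_geom_sum₂ hn hyx hxy) (norm_nonneg _)

end RCLike

theorem stmt_6_general (α β : ℂ) (hab : ‖β‖ ≤ ‖α‖)
    (p n : ℕ) (hn : 0 < n) (hdvd : p ∣ n)
    (hsmall : ‖α ^ (n / p) - β ^ (n / p)‖ ≤ 2 / p * ‖α‖ ^ (n / p)) :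
    ‖α ^ (n / p) - β ^ (n / p)‖ * ‖α‖ ^ ((n / p) * (p - 1)) ≤
      ‖α ^ n - β ^ n‖ := by
  obtain ⟨m, rfl⟩ := hdvd
  have hp : 0 < p := Nat.pos_of_mul_pos_right hn
  rw [Nat.mul_div_cancel_left m hp] at hsmall ⊢
  rw [← norm_pow] at hsmall
  have hβα : ‖β ^ m‖ ≤ ‖α ^ m‖ := by
    rw [norm_pow, norm_pow]; exact pow_le_pow_left₀ (norm_nonneg _) hab m
  rw [pow_mul, ← norm_pow, mul_comm p m, pow_mul, pow_mul]
  exact norm_sub_mul_pow_le_norm_pow_sub_pow hp hβα hsmall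

theorem stmt_6 (α β : ℂ) (hab : ‖β‖ ≤ ‖α‖)
    (p n : ℕ) (hp : p.Prime) (hn : 0 < n) (hdvd : p ∣ n)
    (hsmall : ‖α ^ (n / p) - β ^ (n / p)‖ ≤ 2 / p * ‖α‖ ^ (n / p))
    (hne : α ^ (n / p) ≠ β ^ (n / p)) :
    ‖α ^ (n / p) - β ^ (n / p)‖ * ‖α‖ ^ ((n / p) * (p - 1)) ≤
      ‖α ^ n - β ^ n‖ :=
  stmt_6_general α β hab p n hn hdvd hsmall
end

section
/- Let α, β be complex numbers with |α| ≥ |β|, let p be an odd prime dividing a positive integer n, and suppose |α^{n/p} + β^{n/p}| ≤ (2/p)·|α|^{n/p} and α^{n/p} + β^{n/p} ≠ 0. Then |α^n + β^n| ≥ |α^{n/p} + β^{n/p}| · |α|^{n(p−1)/p}. -/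
/-!
Put `x = α^(n/p)`, `y = β^(n/p)` and `w = -y/x`, so that `‖w‖ ≤ 1` and `‖1 - w‖ ≤ 2/p`.
Since `p` is odd, `x^p + y^p = x^(p-1) (x + y) (1 + w + ⋯ + w^(p-1))`, and it remains to see that
the geometric sum has norm at least `1`. From `‖1 - w^k‖ ≤ k ‖1 - w‖ ≤ 2k/p` we get
`Re w^k ≥ 1 - 2k/p`, and these lower bounds add up to exactly `1` over `k < p`.
-/

open Finset

lemma norm_one_sub_pow_le {R : Type*} [SeminormedRing R] [NormOneClass R] {w : R}
    (hw : ‖w‖ ≤ 1) (k : ℕ) : ‖1 - w ^ k‖ ≤ k * ‖1 - w‖ := by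
  induction k with
  | zero => simp
  | succ k ih =>
    have hwk : ‖w ^ k‖ ≤ 1 := (norm_pow_le w k).trans (pow_le_one₀ (norm_nonneg w) hw)
    calc ‖1 - w ^ (k + 1)‖ = ‖(1 - w ^ k) + w ^ k * (1 - w)‖ := by noncomm_ring
      _ ≤ ‖1 - w ^ k‖ + ‖w ^ k‖ * ‖1 - w‖ :=
          (norm_add_le _ _).trans (by gcongr; exact norm_mul_le _ _)
      _ ≤ k * ‖1 - w‖ + 1 * ‖1 - w‖ := by gcongr
      _ = (k + 1 : ℕ) * ‖1 - w‖ := by push_cast; ring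

lemma sum_range_one_sub_two_div_mul (p : ℕ) (hp : p ≠ 0) :
    ∑ k ∈ range p, (1 - 2 / p * (k : ℝ)) = 1 := by
  have hgauss : (∑ k ∈ range p, (k : ℝ)) * 2 = p * (p - 1) := by
    have := sum_range_id_mul_two p
    rw [← Nat.cast_inj (R := ℝ)] at this
    push_cast [Nat.one_le_iff_ne_zero.mpr hp] at this
    exact this
  rw [sum_sub_distrib, ← mul_sum, sum_const, card_range, nsmul_one]
  field_simp
  linear_combination -hgauss

lemma one_le_re_geom_sum {w : ℂ} {p : ℕ} (hp : p ≠ 0) (hw : ‖w‖ ≤ 1) (hw1 : ‖1 - w‖ ≤ 2 / p) :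
    1 ≤ (∑ k ∈ range p, w ^ k).re := by
  rw [Complex.re_sum, ← sum_range_one_sub_two_div_mul p hp]
  refine sum_le_sum fun k _ => ?_
  have hre : 1 - ‖1 - w ^ k‖ ≤ (w ^ k).re := by
    have := Complex.re_le_norm (1 - w ^ k)
    rw [Complex.sub_re, Complex.one_re] at this
    linarith
  nlinarith [norm_one_sub_pow_le hw k, (k.cast_nonneg : (0 : ℝ) ≤ k)]

lemma norm_add_mul_pow_le_norm_pow_add_pow {x y : ℂ} {p : ℕ} (hp : Odd p) (hyx : ‖y‖ ≤ ‖x‖)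
    (hsmall : ‖x + y‖ ≤ 2 / p * ‖x‖) : ‖x + y‖ * ‖x‖ ^ (p - 1) ≤ ‖x ^ p + y ^ p‖ := by
  rcases eq_or_ne x 0 with rfl | hx
  · rw [norm_zero, norm_le_zero_iff] at hyx
    simp [hyx]
  have hx' : 0 < ‖x‖ := norm_pos_iff.mpr hx
  set w := -y / x
  have hw : ‖w‖ ≤ 1 := by rwa [norm_div, norm_neg, div_le_one hx']
  have hw1 : x * (1 - w) = x + y := by simp only [w]; field_simp; ring
  have hwp : x ^ p * (1 - w ^ p) = x ^ p + y ^ p := by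
    simp only [w]
    rw [div_pow, hp.neg_pow]
    field_simp
    ring
  have hgeom : 1 ≤ ‖∑ k ∈ range p, w ^ k‖ := by
    refine (one_le_re_geom_sum hp.pos.ne' hw ?_).trans (Complex.re_le_norm _)
    rwa [← mul_le_mul_iff_right₀ hx', ← norm_mul, hw1, mul_comm]
  have hfactor : x ^ p + y ^ p = x ^ (p - 1) * (x + y) * ∑ k ∈ range p, w ^ k := by
    rw [← hwp, ← hw1, ← mul_neg_geom_sum, ← pow_sub_one_mul hp.pos.ne']
    ring
  rw [hfactor, norm_mul, norm_mul, norm_pow, mul_comm (‖x‖ ^ (p - 1))]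
  exact le_mul_of_one_le_right (by positivity) hgeom

theorem stmt_7_general (α β : ℂ) (hab : ‖β‖ ≤ ‖α‖)
    (p n : ℕ) (hodd : Odd p) (hdvd : p ∣ n)
    (hsmall : ‖α ^ (n / p) + β ^ (n / p)‖ ≤ 2 / p * ‖α‖ ^ (n / p)) :
    ‖α ^ (n / p) + β ^ (n / p)‖ * ‖α‖ ^ ((n / p) * (p - 1)) ≤
      ‖α ^ n + β ^ n‖ := by
  have hpow : ∀ z : ℂ, (z ^ (n / p)) ^ p = z ^ n := fun z => by
    rw [← pow_mul, Nat.div_mul_cancel hdvd]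
  have key := norm_add_mul_pow_le_norm_pow_add_pow (x := α ^ (n / p)) (y := β ^ (n / p)) hodd
    (by simpa only [norm_pow] using pow_le_pow_left₀ (norm_nonneg β) hab (n / p))
    (by rwa [norm_pow])
  rwa [hpow, hpow, norm_pow, ← pow_mul] at key

theorem stmt_7 (α β : ℂ) (hab : ‖β‖ ≤ ‖α‖)
    (p n : ℕ) (hp : p.Prime) (hodd : Odd p) (hn : 0 < n) (hdvd : p ∣ n)
    (hsmall : ‖α ^ (n / p) + β ^ (n / p)‖ ≤ 2 / p * ‖α‖ ^ (n / p))
    (hne : α ^ (n / p) + β ^ (n / p) ≠ 0) :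
    ‖α ^ (n / p) + β ^ (n / p)‖ * ‖α‖ ^ ((n / p) * (p - 1)) ≤
      ‖α ^ n + β ^ n‖ :=
  stmt_7_general α β hab p n hodd hdvd hsmall
end

section
/- Let α be a nonzero complex number and β its complex conjugate, and let m ≥ 2 be an integer with |α| ≥ 2 (so that |αβ| = |α|^2 ≥ 4). If |α^m + β^m| < 1.6·|α|^m, then |α^{3m} + β^{3m}| ≥ 0.44·|α|^{2m}·|α^m + β^m|. -/
/-!
With `s = z + conj z` real and `z * conj z = ‖z‖²`, the identity `x³ + y³ = (x + y)((x + y)² - 3xy)`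
gives `‖z³ + conj z³‖ = ‖s‖ · |3‖z‖² - s²|`. If `‖s‖ ≤ c‖z‖`, the second factor is at least
`(3 - c²)‖z‖²`; apply this to `z = αᵐ` with `c = 1.6`, where `3 - 1.6² = 0.44`.
-/

open ComplexConjugate

namespace Complex

theorem norm_pow_three_add_conj_pow_three (z : ℂ) :
    ‖z ^ 3 + conj z ^ 3‖ = ‖z + conj z‖ * |3 * ‖z‖ ^ 2 - ‖z + conj z‖ ^ 2| := by
  have hsum : z + conj z = ((2 * z.re : ℝ) : ℂ) := by rw [add_conj]
  have hprod : z * conj z = ((‖z‖ ^ 2 : ℝ) : ℂ) := by rw [mul_conj']; norm_cast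
  have hcube : z ^ 3 + conj z ^ 3 = (z + conj z) * ((z + conj z) ^ 2 - 3 * (z * conj z)) := by
    ring
  rw [hcube, hsum, hprod, norm_real, Real.norm_eq_abs, sq_abs, ← ofReal_pow, ← ofReal_ofNat,
    ← ofReal_mul, ← ofReal_sub, ← ofReal_mul, norm_real, Real.norm_eq_abs, abs_mul,
    abs_sub_comm]

theorem mul_norm_add_conj_le_norm_pow_three_add_conj_pow_three {z : ℂ} {c : ℝ}
    (hc : ‖z + conj z‖ ≤ c * ‖z‖) :
    (3 - c ^ 2) * ‖z‖ ^ 2 * ‖z + conj z‖ ≤ ‖z ^ 3 + conj z ^ 3‖ := by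
  have hsq : ‖z + conj z‖ ^ 2 ≤ c ^ 2 * ‖z‖ ^ 2 := by
    rw [← mul_pow]; exact pow_le_pow_left₀ (norm_nonneg _) hc 2
  have hfactor : (3 - c ^ 2) * ‖z‖ ^ 2 ≤ |3 * ‖z‖ ^ 2 - ‖z + conj z‖ ^ 2| :=
    le_trans (by linarith) (le_abs_self _)
  rw [norm_pow_three_add_conj_pow_three, mul_comm ‖z + conj z‖]
  exact mul_le_mul_of_nonneg_right hfactor (norm_nonneg _)

end Complex

theorem stmt_8_general (α : ℂ) (β : ℂ) (hβ : β = starRingEnd ℂ α)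
    (m : ℕ)
    (h : ‖α ^ m + β ^ m‖ < 1.6 * ‖α‖ ^ m) :
    0.44 * ‖α‖ ^ (2 * m) * ‖α ^ m + β ^ m‖ ≤
      ‖α ^ (3 * m) + β ^ (3 * m)‖ := by
  subst hβ
  rw [← norm_pow, ← map_pow] at h
  have key := Complex.mul_norm_add_conj_le_norm_pow_three_add_conj_pow_three h.le
  rw [mul_comm 3 m, mul_comm 2 m, pow_mul, pow_mul, pow_mul, ← norm_pow, ← map_pow]
  convert key using 3
  norm_num

theorem stmt_8 (α : ℂ) (hα : α ≠ 0) (β : ℂ) (hβ : β = starRingEnd ℂ α)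
    (m : ℕ) (hm : 2 ≤ m) (habs : 2 ≤ ‖α‖)
    (h : ‖α ^ m + β ^ m‖ < 1.6 * ‖α‖ ^ m) :
    0.44 * ‖α‖ ^ (2 * m) * ‖α ^ m + β ^ m‖ ≤
      ‖α ^ (3 * m) + β ^ (3 * m)‖ :=
  stmt_8_general α β hβ m h
end

section
/- The sequence m ↦ (log(C_m / 2))/m is increasing for m ≥ 7, where C_m = (1/(m+1))·binomial(2m, m) is the m-th Catalan number. -/
private lemma cat_pos (k : ℕ) : 0 < catalan k := by
  have h := succ_mul_catalan_eq_centralBinom k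
  have h2 := Nat.centralBinom_pos k
  by_contra h3
  have h4 : catalan k = 0 := Nat.le_zero.mp (Nat.not_lt.mp h3)
  rw [h4, Nat.mul_zero] at h
  omega

private lemma cat_le (k : ℕ) : (k + 1) * catalan k ≤ 4 ^ k := by
  rw [succ_mul_catalan_eq_centralBinom]
  calc Nat.centralBinom k = (2 * k).choose k := rfl
    _ ≤ (2 * k + 1).choose k := Nat.choose_le_choose k (by omega)
    _ ≤ 4 ^ k := Nat.choose_middle_le_pow k

private lemma cat_rec (k : ℕ) : (k + 2) * catalan (k + 1) = 2 * (2 * k + 1) * catalan k := by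
  have h1 := succ_mul_catalan_eq_centralBinom (k + 1)
  have h2 := Nat.succ_mul_centralBinom_succ k
  have h3 := succ_mul_catalan_eq_centralBinom k
  have : (k + 1) * ((k + 2) * catalan (k + 1)) = (k + 1) * (2 * (2 * k + 1) * catalan k) := by
    rw [show k + 1 + 1 = k + 2 from rfl] at h1
    rw [h1]
    rw [h2, ← h3]; ring
  exact Nat.eq_of_mul_eq_mul_left (by omega) this

private lemma exp_three_half_lt : Real.exp (3 / 2) < 4.5 := by
  have h1 : Real.exp (3 / 2) ^ 2 = Real.exp 3 := by
    rw [← Real.exp_nat_mul]; norm_num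
  have h2 : Real.exp 3 = Real.exp 1 ^ 3 := by
    rw [← Real.exp_nat_mul]; norm_num
  have h3 : Real.exp 1 ^ 3 < 2.7182818286 ^ 3 :=
    pow_lt_pow_left₀ Real.exp_one_lt_d9 (Real.exp_pos 1).le (by norm_num)
  have : Real.exp (3 / 2) ^ 2 < 4.5 ^ 2 := by
    rw [h1, h2]; nlinarith
  exact lt_of_pow_lt_pow_left₀ 2 (by norm_num) this

private lemma step (m : ℕ) (hm : 7 ≤ m) :
    Real.log ((catalan m : ℝ) / 2) / m < Real.log ((catalan (m + 1) : ℝ) / 2) / (m + 1) := by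
  have hM : (7 : ℝ) ≤ (m : ℝ) := by exact_mod_cast hm
  set M : ℝ := (m : ℝ) with hMdef
  have hcatpos : (0 : ℝ) < (catalan m : ℝ) := by exact_mod_cast cat_pos m
  set A : ℝ := (catalan m : ℝ) / 2 with hA
  have hApos : 0 < A := by positivity
  set r : ℝ := 2 * (2 * M + 1) / (M + 2) with hr
  have hrpos : 0 < r := by positivity
  -- recursion in ℝ
  have hrec : ((catalan (m + 1) : ℝ)) / 2 = A * r := by
    have := cat_rec m
    have hc := congrArg (fun x : ℕ => (x : ℝ)) this
    push_cast at hc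
    rw [hA, hr]
    field_simp
    nlinarith [hc]
  -- key: A < r ^ m
  have h4r : (4 : ℝ) / r = 1 + 3 / (2 * M + 1) := by
    rw [hr]; field_simp; ring
  have hratio : ((4 : ℝ) / r) ^ m < 2 * (M + 1) := by
    rw [h4r]
    have hx : (0 : ℝ) < 3 / (2 * M + 1) := by positivity
    have h1 : (1 + 3 / (2 * M + 1)) ^ m ≤ Real.exp (3 / (2 * M + 1)) ^ m := by
      apply pow_le_pow_left₀ (by positivity)
      linarith [Real.add_one_le_exp (3 / (2 * M + 1))]
    have h2 : Real.exp (3 / (2 * M + 1)) ^ m = Real.exp (m * (3 / (2 * M + 1))) := by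
      rw [Real.exp_nat_mul]
    have h3 : (m : ℝ) * (3 / (2 * M + 1)) < 3 / 2 := by
      rw [← hMdef, ← mul_div_assoc, div_lt_div_iff₀ (by positivity) (by norm_num : (0:ℝ) < 2)]
      nlinarith
    have h4 : Real.exp ((m : ℝ) * (3 / (2 * M + 1))) < Real.exp (3 / 2) :=
      Real.exp_lt_exp.mpr h3
    have := exp_three_half_lt
    calc (1 + 3 / (2 * M + 1)) ^ m ≤ Real.exp ((m:ℝ) * (3 / (2 * M + 1))) := by rw [← h2]; exact h1
      _ < Real.exp (3 / 2) := h4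
      _ < 4.5 := exp_three_half_lt
      _ ≤ 2 * (M + 1) := by norm_num; linarith
  have hAr : A < r ^ m := by
    have hle : A ≤ 4 ^ m / (2 * (M + 1)) := by
      have := cat_le m
      have hc : ((m : ℝ) + 1) * (catalan m : ℝ) ≤ 4 ^ m := by exact_mod_cast this
      rw [hA, le_div_iff₀ (by positivity)]
      nlinarith
    have h4eq : (4 : ℝ) ^ m = r ^ m * ((4 : ℝ) / r) ^ m := by
      rw [← mul_pow]; congr 1; field_simp
    have : (4 : ℝ) ^ m < r ^ m * (2 * (M + 1)) := by
      rw [h4eq]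
      exact mul_lt_mul_of_pos_left hratio (by positivity)
    calc A ≤ 4 ^ m / (2 * (M + 1)) := hle
      _ < r ^ m := by rw [div_lt_iff₀ (by positivity)]; linarith
  -- conclude
  have hlog : Real.log ((catalan (m + 1) : ℝ) / 2) = Real.log A + Real.log r := by
    rw [hrec, Real.log_mul (ne_of_gt hApos) (ne_of_gt hrpos)]
  have hkey : Real.log A < M * Real.log r := by
    have := Real.log_lt_log hApos hAr
    rwa [Real.log_pow] at this
  rw [hlog]
  rw [div_lt_div_iff₀ (by linarith) (by push_cast; linarith)]
  push_cast
  nlinarith [hkey]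

theorem stmt_11 (m n : ℕ) (hm : 7 ≤ m) (hmn : m < n) :
    Real.log ((catalan m : ℝ) / 2) / m < Real.log ((catalan n : ℝ) / 2) / n := by
  induction n, hmn using Nat.le_induction with
  | base => exact_mod_cast step m hm
  | succ n hn ih =>
    have h7 : 7 ≤ n := by omega
    calc Real.log ((catalan m : ℝ) / 2) / m < Real.log ((catalan n : ℝ) / 2) / n := ih
      _ < _ := by exact_mod_cast step n h7
end
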